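/- For every tournament T, Σ_{(u,v) arc of T} D(u,v)·(D(u,v) − 1) = 2 · tr_4(T), where tr_4(T) is the number of 4-element subsets of V(T) whose induced subtournament is transitive. -/

import Mathlib

/-- A tournament on `n` vertices: an irreflexive relation such that for every
pair of distinct vertices exactly one direction holds. -/
structure Tournament (n : ℕ) where
  rel : Fin n → Fin n → Bool
  irrefl : ∀ v, rel v v = false
  total : ∀ u v, u ≠ v → rel u v = !rel v u

/-- The transitive tournament `Tr_k`. -/
def Tr (k : ℕ) : Tournament k where
  rel i j := decide (i < j)
  irrefl v := by simp
  total u v h := by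
    rcases lt_or_gt_of_ne h with h' | h'
    · simp [h', asymm h']
    · simp [h', asymm h']

/-- The cyclic triangle. -/
def C3 : Tournament 3 where
  rel := ![![false, true, false], ![false, false, true], ![true, false, false]]
  irrefl := by decide
  total := by decide

/-- `W₄`: the non-transitive tournament on 4 vertices with a "winner". -/
def W4 : Tournament 4 where
  rel := ![![false, true, true, true], ![false, false, true, false],
           ![false, false, false, true], ![false, true, false, false]]
  irrefl := by decide
  total := by decide

/-- `L₄`: the non-transitive tournament on 4 vertices with a "loser". -/
def L4 : Tournament 4 where
  rel := ![![false, true, false, true], ![false, false, true, true],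
           ![true, false, false, true], ![false, false, false, false]]
  irrefl := by decide
  total := by decide

/-- `R₄`: the tournament on 4 vertices with out-degree sequence (1,1,2,2). -/
def R4 : Tournament 4 where
  rel := ![![false, true, true, false], ![false, false, true, true],
           ![false, false, false, true], ![true, false, false, false]]
  irrefl := by decide
  total := by decide

/-- Two tournaments on the same number of vertices are isomorphic if some
permutation of the vertices carries one arc relation to the other. -/
def Isomorphic {k : ℕ} (S T : Tournament k) : Prop :=
  ∃ e : Equiv.Perm (Fin k), ∀ i j, S.rel i j = T.rel (e i) (e j)

/-- The subtournament of `T` induced on the subset `A` is isomorphic to `S`. -/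
def IsoOn {k n : ℕ} (S : Tournament k) (T : Tournament n) (A : Finset (Fin n)) : Prop :=
  ∃ f : Fin k → Fin n, Function.Injective f ∧ Finset.univ.image f = A ∧
    ∀ i j, S.rel i j = T.rel (f i) (f j)

open scoped Classical in
/-- The number of `k`-element subsets of the vertex set of `T` whose induced
subtournament is isomorphic to `S` (where `S` has `k` vertices). -/
noncomputable def copyCount {k n : ℕ} (S : Tournament k) (T : Tournament n) : ℕ :=
  ((Finset.powersetCard k (Finset.univ : Finset (Fin n))).filter (IsoOn S T)).card

/-- The (unlabelled) density `p(S, T)`. -/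
noncomputable def density {k n : ℕ} (S : Tournament k) (T : Tournament n) : ℝ :=
  (copyCount S T : ℝ) / (n.choose k : ℝ)

/-- The number of automorphisms of a tournament. -/
def autCount {k : ℕ} (S : Tournament k) : ℕ :=
  (Finset.univ.filter
    (fun e : Equiv.Perm (Fin k) => ∀ i j, S.rel i j = S.rel (e i) (e j))).card

/-- A sequence of tournaments with growing vertex sets is quasi-random if every
fixed tournament `S` on `k` vertices appears with density tending to
`k! / (|Aut S| * 2^(k(k-1)/2))`. -/
def QuasiRandom {nn : ℕ → ℕ} (T : ∀ j, Tournament (nn j)) : Prop :=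
  ∀ (k : ℕ) (S : Tournament k),
    Filter.Tendsto (fun j => density S (T j)) Filter.atTop
      (nhds ((k.factorial : ℝ) / ((autCount S : ℝ) * 2 ^ (k * (k - 1) / 2))))

/-- `D(u,v) = #{w : u→w ∧ w→v}`. -/
def Dcount {n : ℕ} (T : Tournament n) (u v : Fin n) : ℕ :=
  (Finset.univ.filter (fun w => T.rel u w ∧ T.rel w v)).card

/-- `C(u,v) = #{w : v→w ∧ w→u}`. -/
def Ccount {n : ℕ} (T : Tournament n) (u v : Fin n) : ℕ :=
  (Finset.univ.filter (fun w => T.rel v w ∧ T.rel w u)).card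

/-- `I(u,v) = #{w : w→u ∧ w→v}`. -/
def Icount {n : ℕ} (T : Tournament n) (u v : Fin n) : ℕ :=
  (Finset.univ.filter (fun w => T.rel w u ∧ T.rel w v)).card

/-- `O(u,v) = #{w : u→w ∧ v→w}`. -/
def Ocount {n : ℕ} (T : Tournament n) (u v : Fin n) : ℕ :=
  (Finset.univ.filter (fun w => T.rel u w ∧ T.rel v w)).card

/-- The subset `A` induces a transitive subtournament of `T`. -/
def IsTransOn {n : ℕ} (T : Tournament n) (A : Finset (Fin n)) : Prop :=
  ∀ u ∈ A, ∀ v ∈ A, ∀ w ∈ A, T.rel u v → T.rel v w → T.rel u w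

open scoped Classical in
/-- `tr_m(T)`: the number of `m`-element subsets of the vertex set of `T`
inducing a transitive subtournament. -/
noncomputable def trCount (m : ℕ) {n : ℕ} (T : Tournament n) : ℕ :=
  ((Finset.powersetCard m (Finset.univ : Finset (Fin n))).filter (IsTransOn T)).card

/-- The subtournament of `T` induced on a subset `A` of its vertices. -/
noncomputable def induce {n : ℕ} (T : Tournament n) (A : Finset (Fin n)) :
    Tournament A.card where
  rel i j := T.rel (A.orderIsoOfFin rfl i) (A.orderIsoOfFin rfl j)
  irrefl i := T.irrefl _
  total i j h := T.total _ _ (fun hc => h ((A.orderIsoOfFin rfl).injective (Subtype.ext hc)))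

/-- The out-neighbourhood `N⁺(u)` of a vertex. -/
def outSet {n : ℕ} (T : Tournament n) (u : Fin n) : Finset (Fin n) :=
  Finset.univ.filter (fun w => T.rel u w)

/-- The out-degree of a vertex. -/
def outDeg {n : ℕ} (T : Tournament n) (v : Fin n) : ℕ :=
  (Finset.univ.filter (fun w => T.rel v w)).card

/-- The multiset of out-degrees of a tournament. -/
def outDegs {n : ℕ} (T : Tournament n) : Multiset ℕ :=
  Finset.univ.val.map (outDeg T)

/-- The arc relation of `T` is transitive. -/
def IsTransitiveT {k : ℕ} (S : Tournament k) : Prop :=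
  ∀ u v w, S.rel u v → S.rel v w → S.rel u w

/-!
A transitive set of at least two vertices has a unique source `u` and a unique sink `v`, so
`u → v`, and the remaining vertices all lie in `between T u v = {w | u → w → v}`. Conversely,
adding a source and a sink to a transitive set keeps it transitive. Hence transitive
`(m + 2)`-sets correspond to pairs of an arc `(u, v)` and a transitive `m`-subset of
`between T u v`. For `m = 2` every such subset is transitive, and there are
`D(u,v).choose 2 = D(u,v) * (D(u,v) - 1) / 2` of them.
-/

open Finset

namespace Tournament

variable {n : ℕ} (T : Tournament n)

lemma not_rel_of_rel {u v : Fin n} (h : T.rel u v) : ¬ T.rel v u := by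
  rcases eq_or_ne u v with rfl | huv
  · simp [T.irrefl] at h
  · simp [T.total u v huv] at h ⊢
    exact h

lemma rel_or_rel {u v : Fin n} (h : u ≠ v) : T.rel u v ∨ T.rel v u := by
  cases hvu : T.rel v u <;> simp [T.total u v h, hvu]

lemma ne_of_rel {u v : Fin n} (h : T.rel u v) : u ≠ v := by
  rintro rfl
  simp [T.irrefl] at h

def reverse : Tournament n where
  rel u v := T.rel v u
  irrefl v := T.irrefl v
  total u v h := T.total v u h.symm

lemma isTransOn_reverse {T : Tournament n} {A : Finset (Fin n)} :
    IsTransOn T.reverse A ↔ IsTransOn T A :=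
  ⟨fun h u hu v hv w hw huv hvw => h w hw v hv u hu hvw huv,
    fun h u hu v hv w hw huv hvw => h w hw v hv u hu hvw huv⟩

def between (u v : Fin n) : Finset (Fin n) :=
  univ.filter fun w => T.rel u w ∧ T.rel w v

lemma mem_between {u v w : Fin n} : w ∈ T.between u v ↔ T.rel u w ∧ T.rel w v := by
  simp [between]

lemma card_between (u v : Fin n) : #(T.between u v) = Dcount T u v := rfl

def IsSource (A : Finset (Fin n)) (a : Fin n) : Prop :=
  a ∈ A ∧ ∀ b ∈ A, b ≠ a → T.rel a b

variable {T}

lemma IsSource.eq {A : Finset (Fin n)} {a a' : Fin n} (h : T.IsSource A a)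
    (h' : T.IsSource A a') : a = a' := by
  by_contra hne
  exact T.not_rel_of_rel (h.2 a' h'.1 (Ne.symm hne)) (h'.2 a h.1 hne)

end Tournament

namespace IsTransOn

variable {n : ℕ} {T : Tournament n}

lemma mono {A B : Finset (Fin n)} (hB : IsTransOn T B) (hAB : A ⊆ B) :
    IsTransOn T A :=
  fun u hu v hv w hw => hB u (hAB hu) v (hAB hv) w (hAB hw)

lemma insert_source {A : Finset (Fin n)} {a : Fin n} (hA : IsTransOn T A)
    (ha : ∀ b ∈ A, T.rel a b) : IsTransOn T (insert a A) := by
  intro u hu v hv w hw huv hvw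
  rw [mem_insert] at hu hv hw
  rcases hv with rfl | hv
  · rcases hu with rfl | hu
    · exact absurd huv (by simp [T.irrefl])
    · exact absurd huv (T.not_rel_of_rel (ha u hu))
  rcases hw with rfl | hw
  · exact absurd hvw (T.not_rel_of_rel (ha v hv))
  rcases hu with rfl | hu
  · exact ha w hw
  · exact hA u hu v hv w hw huv hvw

lemma insert_sink {A : Finset (Fin n)} {a : Fin n} (hA : IsTransOn T A)
    (ha : ∀ b ∈ A, T.rel b a) : IsTransOn T (insert a A) :=
  Tournament.isTransOn_reverse.1 <| (Tournament.isTransOn_reverse.2 hA).insert_source ha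

end IsTransOn

namespace Tournament

variable {n : ℕ} {T : Tournament n}

lemma isTransOn_of_card_le_two {A : Finset (Fin n)} (hA : #A ≤ 2) : IsTransOn T A := by
  intro u hu v hv w hw huv hvw
  have huw : u = w := by
    by_contra huw
    have hsub : ({u, v, w} : Finset (Fin n)) ⊆ A := by
      simp [insert_subset_iff, hu, hv, hw]
    have := card_le_card hsub
    rw [card_insert_of_notMem (by simp [T.ne_of_rel huv, huw]),
      card_pair (T.ne_of_rel hvw)] at this
    omega
  subst huw
  exact absurd hvw (T.not_rel_of_rel huv)

lemma exists_isSource {A : Finset (Fin n)} (hA : A.Nonempty) (ht : IsTransOn T A) :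
    ∃ a, T.IsSource A a := by
  obtain ⟨a, haA, hmax⟩ := A.exists_max_image (fun a => #(A.filter fun c => T.rel a c)) hA
  refine ⟨a, haA, fun b hbA hba => ?_⟩
  by_contra hab
  have hba' : T.rel b a := (T.rel_or_rel (Ne.symm hba)).resolve_left hab
  -- `b` beats `a` and, by transitivity, everything `a` beats
  have hsub : insert a (A.filter fun c => T.rel a c) ⊆ A.filter fun c => T.rel b c := by
    intro c hc
    rcases mem_insert.1 hc with rfl | hc
    · exact mem_filter.2 ⟨haA, hba'⟩
    · obtain ⟨hcA, hac⟩ := mem_filter.1 hc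
      exact mem_filter.2 ⟨hcA, ht b hbA a haA c hcA hba' hac⟩
  have hcard := card_le_card hsub
  rw [card_insert_of_notMem (by simp [T.irrefl])] at hcard
  exact absurd (hmax b hbA) (by omega)

lemma left_notMem_between (u v : Fin n) : u ∉ T.between u v := by
  simp [mem_between, T.irrefl]

lemma right_notMem_between (u v : Fin n) : v ∉ T.between u v := by
  simp [mem_between, T.irrefl]

section Arc

variable {u v : Fin n} {P : Finset (Fin n)}

lemma notMem_insert_of_subset_between (huv : T.rel u v) (hP : P ⊆ T.between u v) :
    u ∉ insert v P ∧ v ∉ P := by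
  refine ⟨?_, fun h => right_notMem_between u v (hP h)⟩
  rw [mem_insert, not_or]
  exact ⟨T.ne_of_rel huv, fun h => left_notMem_between u v (hP h)⟩

lemma erase_erase_insert_insert (huv : T.rel u v) (hP : P ⊆ T.between u v) :
    ((insert u (insert v P)).erase u).erase v = P := by
  obtain ⟨hu, hv⟩ := notMem_insert_of_subset_between huv hP
  rw [erase_insert hu, erase_insert hv]

lemma isSource_insert_insert (huv : T.rel u v) (hP : P ⊆ T.between u v) :
    T.IsSource (insert u (insert v P)) u := by
  refine ⟨mem_insert_self _ _, ?_⟩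
  simp only [mem_insert]
  rintro b (rfl | rfl | hb) hne
  · exact absurd rfl hne
  · exact huv
  · exact (T.mem_between.1 (hP hb)).1

lemma isSource_reverse_insert_insert (huv : T.rel u v) (hP : P ⊆ T.between u v) :
    T.reverse.IsSource (insert u (insert v P)) v := by
  refine ⟨mem_insert_of_mem (mem_insert_self _ _), ?_⟩
  simp only [mem_insert]
  rintro b (rfl | rfl | hb) hne
  · exact huv
  · exact absurd rfl hne
  · exact (T.mem_between.1 (hP hb)).2

lemma isTransOn_insert_insert (huv : T.rel u v) (hP : P ⊆ T.between u v)
    (hPt : IsTransOn T P) : IsTransOn T (insert u (insert v P)) := by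
  refine (hPt.insert_sink fun b hb => (T.mem_between.1 (hP hb)).2).insert_source ?_
  simp only [mem_insert, forall_eq_or_imp]
  exact ⟨huv, fun b hb => (T.mem_between.1 (hP hb)).1⟩

lemma card_insert_insert (huv : T.rel u v) (hP : P ⊆ T.between u v) :
    #(insert u (insert v P)) = #P + 2 := by
  obtain ⟨hu, hv⟩ := notMem_insert_of_subset_between huv hP
  rw [card_insert_of_notMem hu, card_insert_of_notMem hv]

lemma eq_of_insert_insert_eq {u' v' : Fin n} {P' : Finset (Fin n)} (huv : T.rel u v)
    (hP : P ⊆ T.between u v) (huv' : T.rel u' v') (hP' : P' ⊆ T.between u' v')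
    (h : insert u (insert v P) = insert u' (insert v' P')) : u = u' ∧ v = v' ∧ P = P' := by
  obtain rfl : u = u' :=
    (isSource_insert_insert huv hP).eq (h ▸ isSource_insert_insert huv' hP')
  obtain rfl : v = v' :=
    (isSource_reverse_insert_insert huv hP).eq (h ▸ isSource_reverse_insert_insert huv' hP')
  refine ⟨rfl, rfl, ?_⟩
  rw [← erase_erase_insert_insert huv hP, h, erase_erase_insert_insert huv' hP']

end Arc

lemma exists_insert_insert_eq {A : Finset (Fin n)} {m : ℕ} (hAm : #A = m + 2)
    (hAt : IsTransOn T A) : ∃ u v P, T.rel u v ∧ P ⊆ T.between u v ∧ #P = m ∧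
      IsTransOn T P ∧ insert u (insert v P) = A := by
  have hA : 1 < #A := by omega
  obtain ⟨a, ha⟩ := exists_isSource (card_pos.1 (by omega)) hAt
  obtain ⟨d, hd⟩ := exists_isSource (card_pos.1 (by omega)) (isTransOn_reverse.2 hAt)
  have had : a ≠ d := by
    rintro rfl
    obtain ⟨b, hb, hba⟩ := exists_mem_ne hA a
    exact T.not_rel_of_rel (ha.2 b hb hba) (hd.2 b hb hba)
  have hdA : d ∈ A.erase a := mem_erase.2 ⟨had.symm, hd.1⟩
  refine ⟨a, d, (A.erase a).erase d, ha.2 d hd.1 had.symm, fun b hb => ?_, ?_,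
    hAt.mono ((erase_subset _ _).trans (erase_subset _ _)), ?_⟩
  · obtain ⟨hbd, hba, hbA⟩ : b ≠ d ∧ b ≠ a ∧ b ∈ A := by simpa using hb
    exact T.mem_between.2 ⟨ha.2 b hbA hba, hd.2 b hbA hbd⟩
  · rw [card_erase_of_mem hdA, card_erase_of_mem ha.1, hAm]
    rfl
  · rw [insert_erase hdA, insert_erase ha.1]

variable (T)

open scoped Classical in
theorem trCount_add_two (m : ℕ) :
    trCount (m + 2) T = ∑ u, ∑ v,
      if T.rel u v then #((powersetCard m (T.between u v)).filter (IsTransOn T)) else 0 := by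
  rw [← Fintype.sum_prod_type', ← sum_filter, ← card_sigma, trCount]
  symm
  apply card_nbij fun x => insert x.1.1 (insert x.1.2 x.2)
  · rintro ⟨⟨u, v⟩, P⟩ hx
    simp only [coe_sigma, Set.mem_sigma_iff, coe_filter, mem_univ, true_and, Set.mem_ofPred_eq,
      mem_powersetCard] at hx
    obtain ⟨huv, ⟨hP, rfl⟩, hPt⟩ := hx
    simp only [coe_filter, mem_powersetCard_univ, Set.mem_ofPred_eq]
    exact ⟨card_insert_insert huv hP, isTransOn_insert_insert huv hP hPt⟩
  · rintro ⟨⟨u, v⟩, P⟩ hx ⟨⟨u', v'⟩, P'⟩ hx' h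
    simp only [coe_sigma, Set.mem_sigma_iff, coe_filter, mem_univ, true_and, Set.mem_ofPred_eq,
      mem_powersetCard] at hx hx' h
    obtain ⟨rfl, rfl, rfl⟩ := eq_of_insert_insert_eq hx.1 hx.2.1.1 hx'.1 hx'.2.1.1 h
    rfl
  · intro A hA
    simp only [coe_filter, mem_powersetCard_univ, Set.mem_ofPred_eq] at hA
    obtain ⟨u, v, P, huv, hP, hPm, hPt, rfl⟩ := exists_insert_insert_eq hA.1 hA.2
    refine ⟨⟨(u, v), P⟩, ?_, rfl⟩
    simp only [coe_sigma, Set.mem_sigma_iff, coe_filter, mem_univ, true_and,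
      Set.mem_ofPred_eq, mem_powersetCard]
    exact ⟨huv, ⟨hP, hPm⟩, hPt⟩

end Tournament

lemma Nat.mul_pred_eq_two_mul_choose_two (k : ℕ) : k * (k - 1) = 2 * k.choose 2 := by
  rw [Nat.choose_two_right, Nat.mul_div_cancel' (Nat.even_mul_pred_self k).two_dvd]

/-- `Σ_{arcs (u,v)} D(u,v)(D(u,v)-1) = 2 · tr₄(T)`. -/
theorem sum_D_pairs_eq_two_tr4 (n : ℕ) (T : Tournament n) :
    (∑ u, ∑ v, if T.rel u v then Dcount T u v * (Dcount T u v - 1) else 0) =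
      2 * trCount 4 T := by
  classical
  have hpairs (u v : Fin n) :
      (powersetCard 2 (T.between u v)).filter (IsTransOn T) = powersetCard 2 (T.between u v) :=
    filter_true_of_mem fun P hP => Tournament.isTransOn_of_card_le_two (mem_powersetCard.1 hP).2.le
  rw [T.trCount_add_two 2, mul_sum]
  refine sum_congr rfl fun u _ => ?_
  rw [mul_sum]
  refine sum_congr rfl fun v _ => ?_
  split_ifs
  · rw [hpairs, card_powersetCard, T.card_between, Nat.mul_pred_eq_two_mul_choose_two]
  · rfl
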